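/- Let R be an associative ring with 1, I a two-sided ideal, n ≥ 3, ε ∈ E_n(R,I) with ε = (ε_{ij}), v = ε·e_1, and w ∈ I^n with w^t v = 0. Write w_1 = ε^t w. Then the first entry of w_1 is 0 and I_n + v·w^t = ε · (I_n + e_1·w_1^t) · ε^{-1} = ∏_{j=2}^n ε · e_{1j}((w_1)_j) · ε^{-1}. -/

import Mathlib

/-- Elementary generators `e_{ij}(x)`, `x ∈ J`, over a (possibly noncommutative)
ring with a two-sided ideal `J`. -/
def elemGens (n : ℕ) (S : Type) [Ring S] (J : TwoSidedIdeal S) :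
    Set (Matrix (Fin n) (Fin n) S)ˣ :=
  {g | ∃ i j : Fin n, i ≠ j ∧ ∃ x ∈ J,
    g.val = 1 + Matrix.single i j x}

/-- The elementary subgroup `E_n(S)`. -/
def En (n : ℕ) (S : Type) [Ring S] : Subgroup (Matrix (Fin n) (Fin n) S)ˣ :=
  Subgroup.closure (elemGens n S ⊤)

/-- The relative elementary subgroup `E_n(S, J)`: the normal closure of `E_n(J)`
in `E_n(S)`. -/
def relEn (n : ℕ) (S : Type) [Ring S] (J : TwoSidedIdeal S) :
    Subgroup (Matrix (Fin n) (Fin n) S)ˣ :=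
  Subgroup.closure
    {h | ∃ ε ∈ En n S, ∃ g ∈ Subgroup.closure (elemGens n S J), h = ε * g * ε⁻¹}

/-!
Conjugating by `ε` gives `1 + v wᵗ = ε (1 + e₁ w₁ᵗ) ε⁻¹`, and `(w₁)₁ = wᵗ ε e₁ = wᵗ v = 0`.
Hence `1 + e₁ w₁ᵗ = 1 + ∑_{j ≥ 2} e_{1j}((w₁)_j)`, which is the product of the
`e_{1j}((w₁)_j)` because the off-diagonal matrix units `E_{1j}`, `j ≠ 1`, multiply pairwise
to zero.
-/

open Matrix

theorem Units.list_prod_map_conj {α M : Type*} [Monoid M] (u : Mˣ) (L : List α) (f : α → M) :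
    (L.map fun a => u.val * f a * u⁻¹.val).prod = u.val * (L.map f).prod * u⁻¹.val := by
  simpa [Function.comp_def, ConjAct.units_smul_def] using
    (map_list_prod (MulDistribMulAction.toMonoidHom M (ConjAct.toConjAct u)) (L.map f)).symm

theorem List.prod_map_one_add_of_mul_eq_zero {α M : Type*} [Semiring M] (L : List α)
    (f : α → M) (h : ∀ a ∈ L, ∀ b ∈ L, f a * f b = 0) :
    (L.map fun a => 1 + f a).prod = 1 + (L.map f).sum := by
  induction L with
  | nil => simp
  | cons a L ih =>
    have hL : f a * (L.map f).sum = 0 := by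
      rw [← List.sum_map_mul_left]
      exact List.sum_eq_zero (by simpa using fun b hb => h a (by simp) b (by simp [hb]))
    rw [List.map_cons, List.prod_cons, ih fun a ha b hb => h a (by simp [ha]) b (by simp [hb]),
      List.map_cons, List.sum_cons, add_mul, one_mul, mul_add, mul_one, hL, add_zero]
    abel

theorem Fin.sum_univ_eq_add_sum_drop_one {M : Type*} [AddCommMonoid M] {m : ℕ}
    (f : Fin (m + 1) → M) :
    ∑ j, f j = f 0 + (((List.finRange (m + 1)).drop 1).map f).sum := by
  rw [Fin.sum_univ_def, List.finRange_succ]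
  rfl

theorem Fin.ne_zero_of_mem_drop_one_finRange {m : ℕ} {j : Fin (m + 1)}
    (hj : j ∈ (List.finRange (m + 1)).drop 1) : j ≠ 0 := by
  rw [List.finRange_succ, List.drop_one, List.tail_cons, List.mem_map] at hj
  obtain ⟨k, -, rfl⟩ := hj
  exact Fin.succ_ne_zero k

namespace Matrix

variable {ι R : Type*} [Fintype ι] [DecidableEq ι] [Semiring R]

theorem vecMulVec_mulVec_eq_conj (u : (Matrix ι ι R)ˣ) (x y : ι → R) :
    vecMulVec (u.val *ᵥ x) y = u.val * vecMulVec x (y ᵥ* u.val) * u⁻¹.val := by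
  rw [mul_vecMulVec, vecMulVec_mul, vecMul_vecMul, u.mul_inv, vecMul_one]

theorem vecMulVec_single_one_eq_sum (i : ι) (y : ι → R) :
    vecMulVec (Pi.single i 1) y = ∑ j, single i j (y j) := by
  ext k l
  simp [vecMulVec_apply, Matrix.sum_apply, single_apply, Pi.single_apply, ite_and, eq_comm]

end Matrix

theorem conjugation_formula (n : ℕ) (hn : 3 ≤ n) (R : Type) [Ring R]
    (ε : (Matrix (Fin n) (Fin n) R)ˣ)
    (v w : Fin n → R)
    (hv : v = ε.val.mulVec (Pi.single (⟨0, by omega⟩ : Fin n) 1))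
    (hvw : dotProduct w v = 0)
    (w₁ : Fin n → R) (hw₁ : w₁ = Matrix.vecMul w ε.val) :
    w₁ ⟨0, by omega⟩ = 0 ∧
    1 + Matrix.vecMulVec v w =
      ε.val * (1 + Matrix.vecMulVec
        (Pi.single (⟨0, by omega⟩ : Fin n) 1) w₁) * (ε⁻¹).val ∧
    1 + Matrix.vecMulVec v w =
      (((List.finRange n).drop 1).map fun j =>
        ε.val * (1 + Matrix.single (⟨0, by omega⟩ : Fin n) j (w₁ j)) *
          (ε⁻¹).val).prod := by
  obtain ⟨m, rfl⟩ : ∃ m, n = m + 1 := ⟨n - 1, by omega⟩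
  replace hv : v = ε.val *ᵥ Pi.single 0 1 := hv
  have hw₁0 : w₁ 0 = 0 := by
    rw [hw₁, ← dotProduct_single_one (w ᵥ* ε.val), ← dotProduct_mulVec, ← hv, hvw]
  have hconj : 1 + vecMulVec v w = ε.val * (1 + vecMulVec (Pi.single 0 1) w₁) * ε⁻¹.val := by
    rw [mul_add, add_mul, mul_one, ε.mul_inv, hv, hw₁, vecMulVec_mulVec_eq_conj]
  have hfactor : 1 + vecMulVec (Pi.single 0 1) w₁ =
      (((List.finRange (m + 1)).drop 1).map
        fun j => 1 + single (0 : Fin (m + 1)) j (w₁ j)).prod := by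
    rw [List.prod_map_one_add_of_mul_eq_zero, vecMulVec_single_one_eq_sum,
      Fin.sum_univ_eq_add_sum_drop_one, hw₁0, single_zero, zero_add]
    intro j hj k _
    exact single_mul_single_of_ne (h := Fin.ne_zero_of_mem_drop_one_finRange hj) ..
  refine ⟨hw₁0, hconj, ?_⟩
  rw [hconj, hfactor]
  exact (Units.list_prod_map_conj ε _ _).symm
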